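/- For each positive integer n, the algebra A_n of 2×2 complex matrices of the form [[a, n(a−b)],[0,b]] has hyperreflexivity constant κ_{A_n} ≥ (n²+1)/(2n), as witnessed by the matrix T = [[1,0],[0,−1]]. -/

import Mathlib

/-- A matrix acting as an operator on Euclidean space (so `‖act M‖` is the
operator/spectral norm). -/
noncomputable def act {n : ℕ} (M : Matrix (Fin n) (Fin n) ℂ) :
    EuclideanSpace ℂ (Fin n) →L[ℂ] EuclideanSpace ℂ (Fin n) :=
  LinearMap.toContinuousLinearMap (Matrix.toEuclideanLin M)

/-- Distance from `T` to a subspace of matrices, in the operator norm. -/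
noncomputable def mOpDist {n : ℕ} (T : Matrix (Fin n) (Fin n) ℂ)
    (S : Submodule ℂ (Matrix (Fin n) (Fin n) ℂ)) : ℝ :=
  Metric.infDist (act T) ((fun A => act A) '' (S : Set (Matrix (Fin n) (Fin n) ℂ)))

/-- `β_S(T) = sup_{‖x‖=1} dist(Tx, Sx)`. -/
noncomputable def mBeta {n : ℕ} (S : Submodule ℂ (Matrix (Fin n) (Fin n) ℂ))
    (T : Matrix (Fin n) (Fin n) ℂ) : ℝ :=
  ⨆ x : {x : EuclideanSpace ℂ (Fin n) // ‖x‖ = 1},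
    Metric.infDist (act T x.1) ((fun A => act A x.1) '' (S : Set (Matrix (Fin n) (Fin n) ℂ)))

/-- The algebra `A_n` of matrices `[[a, n(a-b)], [0, b]]`. -/
noncomputable def An (n : ℕ) : Submodule ℂ (Matrix (Fin 2) (Fin 2) ℂ) where
  carrier := {M | M 1 0 = 0 ∧ M 0 1 = (n : ℂ) * (M 0 0 - M 1 1)}
  add_mem' := by
    rintro M N ⟨h1, h2⟩ ⟨h3, h4⟩
    refine ⟨by simp [h1, h3], ?_⟩
    simp only [Matrix.add_apply, h2, h4]; ring
  zero_mem' := by simp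
  smul_mem' := by
    rintro c M ⟨h1, h2⟩
    refine ⟨by simp [h1], ?_⟩
    simp only [Matrix.smul_apply, h2, smul_eq_mul]; ring

/-!
For `A ∈ A_n`, `T - A = [[p, q], [0, r]]` with `|q| = n |a - b| ≥ 2 - |p| - |r|`. This forces
`|r| ≥ 1` or `(1 - |p|²)(1 - |r|²) ≤ |q|²`, and either way `‖T - A‖ ≥ 1`. Conversely
`A_n x ∋ T x` unless `x₀ + n x₁ = 0`, and on that line the scalar matrix `c I` with
`c = (n² - 1)/(n² + 1)` gives `‖(T - c I) x‖ = 2n/(n² + 1)`, so `β(T) ≤ 2n/(n² + 1)`.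
-/

lemma act_sub {n : ℕ} (M N : Matrix (Fin n) (Fin n) ℂ) : act (M - N) = act M - act N := by
  simp [act]

lemma act_apply_fin_two (M : Matrix (Fin 2) (Fin 2) ℂ) (x : EuclideanSpace ℂ (Fin 2)) (i : Fin 2) :
    act M x i = M i 0 * x 0 + M i 1 * x 1 := by
  simp [act, Matrix.mulVec, dotProduct, Fin.sum_univ_two]

lemma norm_sq_fin_two (y : EuclideanSpace ℂ (Fin 2)) : ‖y‖ ^ 2 = ‖y 0‖ ^ 2 + ‖y 1‖ ^ 2 := by
  simp [EuclideanSpace.norm_sq_eq, Fin.sum_univ_two]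

lemma norm_apply_le_norm_act {n : ℕ} (M : Matrix (Fin n) (Fin n) ℂ) (i j : Fin n) :
    ‖M i j‖ ≤ ‖act M‖ := by
  calc ‖M i j‖ = ‖act M (EuclideanSpace.single j 1) i‖ := by
        simp [act, Matrix.mulVec_single]
    _ ≤ ‖act M (EuclideanSpace.single j 1)‖ := PiLp.norm_apply_le _ _
    _ ≤ ‖act M‖ := (act M).unit_le_opNorm _ (by simp)

lemma le_mOpDist_iff {n : ℕ} (T : Matrix (Fin n) (Fin n) ℂ)
    (S : Submodule ℂ (Matrix (Fin n) (Fin n) ℂ)) {d : ℝ} :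
    d ≤ mOpDist T S ↔ ∀ A ∈ S, d ≤ ‖act (T - A)‖ := by
  rw [mOpDist, Metric.le_infDist (Set.Nonempty.image _ ⟨0, S.zero_mem⟩)]
  simp [dist_eq_norm, act_sub]

lemma mBeta_le {n : ℕ} (S : Submodule ℂ (Matrix (Fin n) (Fin n) ℂ))
    (T : Matrix (Fin n) (Fin n) ℂ) {C : ℝ} (hC : 0 ≤ C)
    (h : ∀ x : EuclideanSpace ℂ (Fin n), ‖x‖ = 1 → ∃ A ∈ S, ‖act (T - A) x‖ ≤ C) :
    mBeta S T ≤ C := by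
  refine Real.iSup_le (fun ⟨x, hx⟩ => ?_) hC
  obtain ⟨A, hA, hAx⟩ := h x hx
  calc _ ≤ dist (act T x) (act A x) :=
        Metric.infDist_le_dist_of_mem (Set.mem_image_of_mem (fun A => act A x) hA)
    _ ≤ C := by rwa [dist_eq_norm, ← sub_apply, ← act_sub]

lemma ContinuousLinearMap.one_le_opNorm_of_norm_le_norm_apply {𝕜 E F : Type*}
    [NontriviallyNormedField 𝕜] [NormedAddCommGroup E] [NormedAddCommGroup F]
    [NormedSpace 𝕜 E] [NormedSpace 𝕜 F] (f : E →L[𝕜] F) {x : E} (hx : x ≠ 0)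
    (h : ‖x‖ ≤ ‖f x‖) : 1 ≤ ‖f‖ :=
  le_of_mul_le_mul_right (by simpa using h.trans (f.le_opNorm x)) (norm_pos_iff.2 hx)

lemma one_le_norm_act_upperTriangular (p q r : ℂ)
    (h : (1 - ‖p‖ ^ 2) * (1 - ‖r‖ ^ 2) ≤ ‖q‖ ^ 2) : 1 ≤ ‖act !![p, q; 0, r]‖ := by
  rcases le_or_gt 1 ‖p‖ with hp | hp
  · exact hp.trans (norm_apply_le_norm_act !![p, q; 0, r] 0 0)
  -- when `|p| < 1`, the vector `(q p̄, 1 - |p|²)` is not shrunk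
  obtain ⟨c, hc⟩ : ∃ c : ℝ, c = 1 - ‖p‖ ^ 2 := ⟨_, rfl⟩
  have hc0 : 0 < c := by nlinarith [norm_nonneg p]
  set x : EuclideanSpace ℂ (Fin 2) := !₂[q * starRingEnd ℂ p, c]
  have hx : x ≠ 0 := fun h0 => by
    simpa [x, hc0.ne'] using congrArg (fun y : EuclideanSpace ℂ (Fin 2) => y 1) h0
  have hMx0 : act !![p, q; 0, r] x 0 = q := by
    simp only [act_apply_fin_two, x, hc, Matrix.of_apply, Matrix.cons_val', Matrix.cons_val_zero,
      Matrix.cons_val_one, Matrix.cons_val_fin_one, Complex.ofReal_sub, Complex.ofReal_one,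
      Complex.ofReal_pow]
    linear_combination q * Complex.mul_conj' p
  have hMx1 : act !![p, q; 0, r] x 1 = c * r := by
    simp [act_apply_fin_two, x, mul_comm]
  refine (act _).one_le_opNorm_of_norm_le_norm_apply hx ?_
  rw [← pow_le_pow_iff_left₀ (norm_nonneg _) (norm_nonneg _) two_ne_zero, norm_sq_fin_two,
    norm_sq_fin_two, hMx0, hMx1]
  simp only [x, Matrix.cons_val_zero, Matrix.cons_val_one, norm_mul, RCLike.norm_conj,
    Complex.norm_real, Real.norm_of_nonneg hc0.le]
  have key := mul_le_mul_of_nonneg_left h hc0.le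
  subst hc
  linear_combination key

lemma one_mem_An (n : ℕ) : (1 : Matrix (Fin 2) (Fin 2) ℂ) ∈ An n := by
  simp [An]

lemma diag_sub_eq_of_mem_An {n : ℕ} {A : Matrix (Fin 2) (Fin 2) ℂ} (hA : A ∈ An n) :
    !![(1 : ℂ), 0; 0, -1] - A = !![1 - A 0 0, -(n * (A 0 0 - A 1 1)); 0, -1 - A 1 1] := by
  obtain ⟨h10, h01⟩ := hA
  ext i j
  fin_cases i <;> fin_cases j <;> simp [h10, h01]

lemma two_sub_norm_sub_norm_le_norm_sub {a b : ℂ} : 2 - ‖1 - a‖ - ‖-1 - b‖ ≤ ‖a - b‖ := by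
  have h2 : (2 : ℂ) = (a - b) + (1 - a) - (-1 - b) := by ring
  have : ‖(2 : ℂ)‖ = 2 := by norm_num
  linarith [norm_add_le (a - b) (1 - a), norm_sub_le ((a - b) + (1 - a)) (-1 - b),
    congrArg norm h2]

lemma one_sub_sq_mul_one_sub_sq_le {s t u : ℝ} (hs : 0 ≤ s) (ht : 0 ≤ t) (ht1 : t < 1)
    (hu : 2 - s - t ≤ u) : (1 - s ^ 2) * (1 - t ^ 2) ≤ u ^ 2 := by
  rcases le_or_gt 1 s with hs1 | hs1
  · nlinarith [sq_nonneg u,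
      mul_nonneg (by nlinarith : 0 ≤ s ^ 2 - 1) (by nlinarith : 0 ≤ 1 - t ^ 2)]
  -- `(1 - s²)(1 - t²) = (1 - s)(1 - t) · (1 + s)(1 + t) ≤ 4 (1 - s)(1 - t) ≤ (2 - s - t)²`
  nlinarith [mul_nonneg (mul_nonneg (sub_nonneg.2 hs1.le) (sub_nonneg.2 ht1.le))
    (by nlinarith : (0 : ℝ) ≤ 4 - (1 + s) * (1 + t)), sq_nonneg (s - t)]

lemma one_le_norm_act_diag_sub_of_mem_An {n : ℕ} (hn : 1 ≤ n) {A : Matrix (Fin 2) (Fin 2) ℂ}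
    (hA : A ∈ An n) : 1 ≤ ‖act (!![(1 : ℂ), 0; 0, -1] - A)‖ := by
  rw [diag_sub_eq_of_mem_An hA]
  rcases le_or_gt 1 ‖-1 - A 1 1‖ with ht | ht
  · exact ht.trans
      (norm_apply_le_norm_act !![1 - A 0 0, -(n * (A 0 0 - A 1 1)); 0, -1 - A 1 1] 1 1)
  refine one_le_norm_act_upperTriangular _ _ _
    (one_sub_sq_mul_one_sub_sq_le (norm_nonneg _) (norm_nonneg _) ht ?_)
  rw [norm_neg, norm_mul, Complex.norm_natCast]
  exact two_sub_norm_sub_norm_le_norm_sub.trans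
    (le_mul_of_one_le_left (norm_nonneg _) (by exact_mod_cast hn))

lemma one_le_mOpDist_An {n : ℕ} (hn : 1 ≤ n) : 1 ≤ mOpDist !![(1 : ℂ), 0; 0, -1] (An n) :=
  (le_mOpDist_iff _ _).2 fun _ hA => one_le_norm_act_diag_sub_of_mem_An hn hA

lemma exists_mem_An_act_eq {n : ℕ} {x : EuclideanSpace ℂ (Fin 2)} (h : x 0 + n * x 1 ≠ 0) :
    ∃ A ∈ An n, act A x = act !![(1 : ℂ), 0; 0, -1] x := by
  set a := (x 0 - n * x 1) / (x 0 + n * x 1)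
  have ha : a * (x 0 + n * x 1) = x 0 - n * x 1 := div_mul_cancel₀ _ h
  refine ⟨!![a, n * (a + 1); 0, -1], ⟨rfl, by simp⟩, ?_⟩
  ext i
  fin_cases i <;> simp [act_apply_fin_two]
  linear_combination ha

lemma norm_act_diag_sub_smul_one {n : ℕ} {x : EuclideanSpace ℂ (Fin 2)} (hx : ‖x‖ = 1)
    (h : x 0 = -(n * x 1)) :
    ‖act (!![(1 : ℂ), 0; 0, -1] - (((n ^ 2 - 1) / (n ^ 2 + 1) : ℝ) : ℂ) • 1) x‖
      = 2 * n / (n ^ 2 + 1) := by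
  set c : ℝ := (n ^ 2 - 1) / (n ^ 2 + 1)
  have hx0 : ‖x 0‖ = n * ‖x 1‖ := by simp [h]
  have hx1 : (n ^ 2 + 1) * ‖x 1‖ ^ 2 = 1 := by
    have := norm_sq_fin_two x
    rw [hx, hx0] at this
    linear_combination -this
  have e0 : act (!![(1 : ℂ), 0; 0, -1] - (c : ℂ) • 1) x 0 = ((1 - c : ℝ) : ℂ) * x 0 := by
    simp [act_apply_fin_two]
  have e1 : act (!![(1 : ℂ), 0; 0, -1] - (c : ℂ) • 1) x 1 = -(((1 + c : ℝ) : ℂ) * x 1) := by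
    simp only [act_apply_fin_two, Matrix.sub_apply, Matrix.smul_apply,
      Matrix.one_apply_ne one_ne_zero, Matrix.one_apply_eq, Matrix.of_apply, Matrix.cons_val_zero,
      Matrix.cons_val_one, Matrix.cons_val_fin_one, Matrix.cons_val', Complex.ofReal_add,
      Complex.ofReal_one]
    ring
  have hpos : (0 : ℝ) < n ^ 2 + 1 := by positivity
  have h_one_sub : 1 - c = 2 / (n ^ 2 + 1) := by simp only [c]; field_simp; ring
  have h_one_add : 1 + c = 2 * n ^ 2 / (n ^ 2 + 1) := by simp only [c]; field_simp; ring
  rw [← pow_left_inj₀ (norm_nonneg _) (by positivity) two_ne_zero, norm_sq_fin_two, e0, e1,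
    norm_neg, norm_mul, norm_mul, Complex.norm_real, Complex.norm_real, hx0, h_one_sub, h_one_add,
    Real.norm_of_nonneg (by positivity), Real.norm_of_nonneg (by positivity)]
  field_simp
  linear_combination (n : ℝ) ^ 2 * hx1

lemma mBeta_An_le (n : ℕ) : mBeta (An n) !![(1 : ℂ), 0; 0, -1] ≤ 2 * n / (n ^ 2 + 1) := by
  refine mBeta_le _ _ (by positivity) fun x hx => ?_
  by_cases h : x 0 + n * x 1 = 0
  · exact ⟨_, (An n).smul_mem _ (one_mem_An n),
      (norm_act_diag_sub_smul_one hx (eq_neg_of_add_eq_zero_left h)).le⟩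
  · obtain ⟨A, hA, hAx⟩ := exists_mem_An_act_eq h
    exact ⟨A, hA, by rw [act_sub, sub_apply, hAx, sub_self, norm_zero]; positivity⟩

/-- `κ_{A_n} ≥ (n²+1)/(2n)`, witnessed by `T = diag(1, -1)`:
`dist(T, A_n) ≥ ((n²+1)/(2n)) · β_{A_n}(T)`. -/
theorem An_kappa_ge (n : ℕ) (hn : 1 ≤ n) :
    ((n ^ 2 + 1 : ℝ) / (2 * n)) * mBeta (An n) !![(1 : ℂ), 0; 0, -1]
      ≤ mOpDist !![(1 : ℂ), 0; 0, -1] (An n) := by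
  have hn' : (0 : ℝ) < n := by exact_mod_cast hn
  calc ((n ^ 2 + 1 : ℝ) / (2 * n)) * mBeta (An n) !![(1 : ℂ), 0; 0, -1]
      ≤ ((n ^ 2 + 1 : ℝ) / (2 * n)) * (2 * n / (n ^ 2 + 1)) := by
        gcongr
        exact mBeta_An_le n
    _ = 1 := by field_simp
    _ ≤ mOpDist !![(1 : ℂ), 0; 0, -1] (An n) := one_le_mOpDist_An hn
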